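/- For all n ≥ 5, the automorphism group of the modified bubble-sort graph of dimension n has order 2n · n!. -/

import Mathlib

open Equiv

/-- The Cayley graph of `Sₙ = Perm (Fin n)` with connection set `S`:
vertices `h, g` are adjacent iff `g * h⁻¹ ∈ S` (for a symmetric identity-free
set `S`, such as a set of transpositions, `fromRel` yields exactly this relation). -/
def Cay (n : ℕ) (S : Set (Equiv.Perm (Fin n))) : SimpleGraph (Equiv.Perm (Fin n)) :=
  SimpleGraph.fromRel (fun h g => g * h⁻¹ ∈ S)

/-- The transposition graph `T(S)` of `S`: vertices `i, j ∈ Fin n` are adjacent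
iff the transposition `swap i j ∈ S`. -/
def TransGraph (n : ℕ) (S : Set (Equiv.Perm (Fin n))) : SimpleGraph (Fin n) :=
  SimpleGraph.fromRel (fun i j => Equiv.swap i j ∈ S)

/-- The automorphism group of a graph, as a subgroup of the symmetric group on
its vertex set. -/
def graphAut {V : Type*} (G : SimpleGraph V) : Subgroup (Equiv.Perm V) where
  carrier := {f | ∀ x y, G.Adj (f x) (f y) ↔ G.Adj x y}
  one_mem' := by intro x y; simp
  mul_mem' := by
    intro a b ha hb x y
    simp only [Equiv.Perm.mul_apply]
    rw [ha, hb]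
  inv_mem' := by
    intro a ha x y
    rw [← ha (a⁻¹ x) (a⁻¹ y)]
    simp

/-- The image `R(Sₙ)` of the right regular representation of `Sₙ` inside `Sym(Sₙ)`:
all permutations of the form `x ↦ x * a`. -/
def Rrep (n : ℕ) : Subgroup (Equiv.Perm (Equiv.Perm (Fin n))) where
  carrier := {f | ∃ a : Equiv.Perm (Fin n), f = Equiv.mulRight a}
  one_mem' := ⟨1, by ext x; simp⟩
  mul_mem' := by
    rintro _ _ ⟨a, rfl⟩ ⟨b, rfl⟩
    exact ⟨b * a, by ext x; simp [mul_assoc]⟩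
  inv_mem' := by
    rintro _ ⟨a, rfl⟩
    exact ⟨a⁻¹, by ext x; simp⟩

/-- The image `λ(Sₙ)` of the left regular representation of `Sₙ` inside `Sym(Sₙ)`:
all permutations of the form `x ↦ b⁻¹ * x`. -/
def LrepAll (n : ℕ) : Subgroup (Equiv.Perm (Equiv.Perm (Fin n))) where
  carrier := {f | ∃ b : Equiv.Perm (Fin n), f = Equiv.mulLeft b⁻¹}
  one_mem' := ⟨1, by ext x; simp⟩
  mul_mem' := by
    rintro _ _ ⟨a, rfl⟩ ⟨b, rfl⟩
    exact ⟨b * a, by ext x; simp [mul_assoc]⟩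
  inv_mem' := by
    rintro _ ⟨a, rfl⟩
    exact ⟨a⁻¹, by ext x; simp⟩

/-- The subgroup `λ(Aut(T(S))) = { x ↦ a⁻¹ * x : a ∈ Aut(T(S)) }` of `Sym(Sₙ)`. -/
def Lrep (n : ℕ) (S : Set (Equiv.Perm (Fin n))) :
    Subgroup (Equiv.Perm (Equiv.Perm (Fin n))) where
  carrier := {f | ∃ a ∈ graphAut (TransGraph n S), f = Equiv.mulLeft a⁻¹}
  one_mem' := ⟨1, one_mem _, by ext x; simp⟩
  mul_mem' := by
    rintro _ _ ⟨a, ha, rfl⟩ ⟨b, hb, rfl⟩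
    exact ⟨b * a, mul_mem hb ha, by ext x; simp [mul_assoc]⟩
  inv_mem' := by
    rintro _ ⟨a, ha, rfl⟩
    exact ⟨a⁻¹, inv_mem ha, by ext x; simp⟩

/-!
Right translations act regularly on the Cayley graph `Γ = Cay(Sₙ, S)`, so
`|Aut Γ| = n! · |Aut(Γ)₁|`, and the stabiliser `Aut(Γ)₁` has the same order `2n` as the
automorphism group of the transposition graph `T(S)`, the `n`-cycle.

Conjugation by an automorphism of `T(S)` preserves `S` and fixes `1`, and it is injective because
`Sₙ` has trivial centre. Conversely, an element of `Aut(Γ)₁` permutes the neighbourhood `S` of `1`.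
For `p ≠ q` the transpositions `sw p`, `sw q` commute exactly when the edges `p`, `q` of the cycle
are not adjacent, and then `sw q * sw p` is their only common neighbour besides `1`; hence the
induced permutation of the edges of the cycle is again an automorphism of the cycle. This
assignment is injective: an automorphism fixing `1` and `S` pointwise fixes every `sw p * sw q`
(by uniqueness of common neighbours; the two non-commuting neighbours of `sw q` cannot be
exchanged, as a count of common neighbours shows once `n ≥ 5`), and translating along the
generating set `S` shows that it is the identity.
-/

open Equiv Function

namespace Fin

open Fin.CommRing

variable {n : ℕ} [NeZero n]

theorem add_natCast_ne_self (x : Fin n) {k : ℕ} (hk : 0 < k) (hkn : k < n) : x + k ≠ x := by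
  rw [Ne, add_eq_left, Fin.natCast_eq_zero]
  exact fun h => absurd (Nat.le_of_dvd hk h) (by omega)

theorem add_one_ne_self (hn : 2 ≤ n) (x : Fin n) : x + 1 ≠ x := by
  simpa using add_natCast_ne_self x (k := 1) (by norm_num) hn

theorem add_two_ne_self (hn : 3 ≤ n) (x : Fin n) : x + 1 + 1 ≠ x := by
  intro h
  apply add_natCast_ne_self x (k := 2) (by norm_num) hn
  push_cast
  linear_combination h

theorem add_three_ne_self (hn : 4 ≤ n) (x : Fin n) : x + 1 + 1 + 1 ≠ x := by
  intro h
  apply add_natCast_ne_self x (k := 3) (by norm_num) hn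
  push_cast
  linear_combination h

theorem add_four_ne_self (hn : 5 ≤ n) (x : Fin n) : x + 1 + 1 + 1 + 1 ≠ x := by
  intro h
  apply add_natCast_ne_self x (k := 4) (by norm_num) hn
  push_cast
  linear_combination h

end Fin

namespace Equiv

variable {α : Type*} [DecidableEq α] {s : α → α}

theorem swap_succ_injective (h1 : ∀ x, s x ≠ x) (h2 : ∀ x, s (s x) ≠ x) :
    Injective fun a => swap a (s a) := by
  intro a b h
  have := congrArg (· a) h
  simp only [swap_apply_def] at this
  grind

theorem swap_succ_mul_swap_succ_eq (hs : Injective s) (h1 : ∀ x, s x ≠ x)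
    (h2 : ∀ x, s (s x) ≠ x) (h3 : ∀ x, s (s (s x)) ≠ x) {a b p q : α} (hpq : p ≠ q)
    (h : swap a (s a) * swap p (s p) = swap b (s b) * swap q (s q)) :
    (a = p ∧ b = q) ∨ (a = q ∧ b = p ∧ q ≠ s p ∧ p ≠ s q) := by
  -- a finite case analysis on the values of both sides at these six points
  have e x : swap a (s a) (swap p (s p) x) = swap b (s b) (swap q (s q) x) :=
    congrArg (· x) h
  have := e p; have := e (s p); have := e q; have := e (s q); have := e a; have := e (s a)
  simp only [swap_apply_def] at *
  grind [hs.eq_iff]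

end Equiv

theorem eq_one_of_forall_conj_eq {n : ℕ} (hn : 3 ≤ n) {c : Perm (Fin n)}
    (hc : ∀ x, c * x * c⁻¹ = x) : c = 1 := by
  have : NeZero n := ⟨by omega⟩
  ext p
  have hmem (q : Fin n) (hpq : p ≠ q) : c p = p ∨ c p = q := by
    have h := congrArg (· (c p)) (hc (swap p q))
    simp only [← swap_apply_apply, swap_apply_left] at h
    have := swap_apply_ne_self_iff.1 (h ▸ c.injective.ne hpq.symm)
    tauto
  have := hmem (p + 1) (Fin.add_one_ne_self (by omega) p).symm
  have := hmem (p + 1 + 1) (Fin.add_two_ne_self hn p).symm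
  have := Fin.add_one_ne_self (by omega) (p + 1)
  simp only [Perm.one_apply]
  grind

section Cayley

variable {n : ℕ} {S : Set (Perm (Fin n))}

theorem cay_adj_iff (h1 : 1 ∉ S) (hinv : ∀ s ∈ S, s⁻¹ ∈ S) {x y : Perm (Fin n)} :
    (Cay n S).Adj x y ↔ y * x⁻¹ ∈ S := by
  rw [Cay, SimpleGraph.fromRel_adj]
  refine ⟨fun ⟨_, h⟩ => h.elim id fun h => by simpa using hinv _ h, fun h => ⟨?_, Or.inl h⟩⟩
  rintro rfl
  exact h1 (by simpa using h)

theorem mulRight_mem_graphAut_cay (S : Set (Perm (Fin n))) (a : Perm (Fin n)) :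
    Equiv.mulRight a ∈ graphAut (Cay n S) := by
  intro x y
  simp [Cay, mul_assoc]

theorem card_graphAut_cay (S : Set (Perm (Fin n))) :
    Nat.card (graphAut (Cay n S)) =
      Nat.card (MulAction.stabilizer (graphAut (Cay n S)) (1 : Perm (Fin n))) * n.factorial := by
  have horbit : MulAction.orbit (graphAut (Cay n S)) (1 : Perm (Fin n)) = Set.univ :=
    Set.eq_univ_of_forall fun g => ⟨⟨Equiv.mulRight g, mulRight_mem_graphAut_cay S g⟩, one_mul g⟩
  rw [← Subgroup.card_mul_index, MulAction.index_stabilizer (graphAut (Cay n S)) (1 : Perm (Fin n)),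
    horbit, Set.ncard_univ,
    Nat.card_perm, Nat.card_fin]

theorem transGraph_adj_iff (S : Set (Perm (Fin n))) {p q : Fin n} :
    (TransGraph n S).Adj p q ↔ p ≠ q ∧ swap p q ∈ S := by
  rw [TransGraph, SimpleGraph.fromRel_adj, swap_comm q p, or_self]

theorem conj_mem_of_mem_graphAut_transGraph (hS : ∀ s ∈ S, s.IsSwap) {a s : Perm (Fin n)}
    (ha : a ∈ graphAut (TransGraph n S)) (hs : s ∈ S) : a * s * a⁻¹ ∈ S := by
  obtain ⟨x, y, hxy, rfl⟩ := hS s hs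
  rw [← swap_apply_apply]
  exact ((transGraph_adj_iff S).1 ((ha x y).2 ((transGraph_adj_iff S).2 ⟨hxy, hs⟩))).2

theorem conj_mem_iff_of_mem_graphAut_transGraph (hS : ∀ s ∈ S, s.IsSwap)
    {a s : Perm (Fin n)} (ha : a ∈ graphAut (TransGraph n S)) : a * s * a⁻¹ ∈ S ↔ s ∈ S := by
  refine ⟨fun h => ?_, conj_mem_of_mem_graphAut_transGraph hS ha⟩
  simpa [mul_assoc] using conj_mem_of_mem_graphAut_transGraph hS (inv_mem ha) h

theorem conj_mem_graphAut_cay (hS : ∀ s ∈ S, s.IsSwap) {a : Perm (Fin n)}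
    (ha : a ∈ graphAut (TransGraph n S)) : (MulAut.conj a).toEquiv ∈ graphAut (Cay n S) := by
  intro x y
  have hconj (u v : Perm (Fin n)) : a * u * a⁻¹ * (a * v * a⁻¹)⁻¹ = a * (u * v⁻¹) * a⁻¹ := by
    group
  simp only [Cay, SimpleGraph.fromRel_adj, MulEquiv.toEquiv_eq_coe, MulEquiv.coe_toEquiv,
    MulAut.conj_apply, hconj, conj_mem_iff_of_mem_graphAut_transGraph hS ha, ne_eq,
    mul_left_inj, mul_right_inj]

theorem card_graphAut_transGraph_le (hn : 3 ≤ n) (hS : ∀ s ∈ S, s.IsSwap) :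
    Nat.card (graphAut (TransGraph n S)) ≤
      Nat.card (MulAction.stabilizer (graphAut (Cay n S)) (1 : Perm (Fin n))) := by
  refine Nat.card_le_card_of_injective
    (fun a => ⟨⟨(MulAut.conj a.1).toEquiv, conj_mem_graphAut_cay hS a.2⟩, ?_⟩) ?_
  · simp [MulAction.mem_stabilizer_iff, Subgroup.smul_def, Perm.smul_def]
  · intro a b hab
    have h (x : Perm (Fin n)) : a.1 * x * a.1⁻¹ = b.1 * x * b.1⁻¹ :=
      congrArg (fun f : MulAction.stabilizer (graphAut (Cay n S)) (1 : Perm (Fin n)) => f.1.1 x)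
        hab
    have := eq_one_of_forall_conj_eq hn (c := b.1⁻¹ * a.1) fun x =>
      calc _ = b.1⁻¹ * (a.1 * x * a.1⁻¹) * b.1 := by group
        _ = x := by rw [h]; group
    exact Subtype.ext (inv_mul_eq_one.1 this).symm

theorem eq_one_of_forall_apply_mul_eq (hgen : Submonoid.closure S = ⊤)
    (hloc : ∀ f ∈ graphAut (Cay n S), f 1 = 1 → (∀ s ∈ S, f s = s) →
      ∀ s ∈ S, ∀ t ∈ S, f (t * s) = t * s)
    {f : Perm (Perm (Fin n))} (hf : f ∈ graphAut (Cay n S)) (h1 : f 1 = 1)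
    (hS : ∀ s ∈ S, f s = s) : f = 1 := by
  have key (g : Perm (Fin n)) : f g = g ∧ ∀ t ∈ S, f (t * g) = t * g := by
    induction (hgen ▸ Submonoid.mem_top g : g ∈ Submonoid.closure S)
      using Submonoid.closure_induction_left with
    | one => exact ⟨h1, fun t ht => by simpa using hS t ht⟩
    | mul_left s hs g _ ih =>
      refine ⟨ih.2 s hs, fun t ht => ?_⟩
      -- conjugating by the right translation by `g` moves the hypothesis from `g` to `1`
      let F := Equiv.mulRight g⁻¹ * f * Equiv.mulRight g
      have hF : F ∈ graphAut (Cay n S) :=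
        mul_mem (mul_mem (mulRight_mem_graphAut_cay S _) hf) (mulRight_mem_graphAut_cay S _)
      have hFapply (x : Perm (Fin n)) : F x = f (x * g) * g⁻¹ := rfl
      have := hloc F hF (by simp [hFapply, ih.1]) (fun s' hs' => by simp [hFapply, ih.2 s' hs'])
        s hs t ht
      rw [hFapply, mul_inv_eq_iff_eq_mul] at this
      simpa [mul_assoc] using this
  ext g
  simp [(key g).1]

end Cayley

namespace ModifiedBubbleSort

open Fin

variable {n : ℕ} [NeZero n]

def sw (i : Fin n) : Perm (Fin n) := swap i (i + 1)

def adjSwaps (n : ℕ) [NeZero n] : Set (Perm (Fin n)) := Set.range sw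

local infix:50 " ∼ " => SimpleGraph.Adj (Cay _ (adjSwaps _))

@[simp] theorem sw_mul_self (i : Fin n) : sw i * sw i = 1 := swap_mul_self _ _

@[simp] theorem sw_inv (i : Fin n) : (sw i)⁻¹ = sw i := swap_inv _ _

theorem sw_ne_one (hn : 2 ≤ n) (i : Fin n) : sw i ≠ 1 := by
  rw [sw, Ne, swap_eq_one_iff]
  exact (add_one_ne_self hn i).symm

theorem sw_injective (hn : 3 ≤ n) : Injective (sw (n := n)) :=
  swap_succ_injective (add_one_ne_self (by omega)) (add_two_ne_self hn)

theorem sw_mul_sw_ne_one (hn : 3 ≤ n) {p q : Fin n} (hpq : p ≠ q) : sw p * sw q ≠ 1 := by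
  rw [Ne, mul_eq_one_iff_eq_inv, sw_inv]
  exact (sw_injective hn).ne hpq

theorem sw_mul_sw_eq_sw_mul_sw (hn : 4 ≤ n) {a b p q : Fin n} (hpq : p ≠ q)
    (h : sw a * sw p = sw b * sw q) :
    (a = p ∧ b = q) ∨ (a = q ∧ b = p ∧ q ≠ p + 1 ∧ p ≠ q + 1) :=
  swap_succ_mul_swap_succ_eq (add_left_injective 1) (add_one_ne_self (by omega))
    (add_two_ne_self (by omega)) (add_three_ne_self hn) hpq h

theorem sw_mul_sw_comm {p q : Fin n} (hpq : p ≠ q) (h₁ : q ≠ p + 1) (h₂ : p ≠ q + 1) :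
    sw p * sw q = sw q * sw p := by
  ext x
  have : p + 1 ≠ q + 1 := fun h => hpq (add_right_cancel h)
  simp only [sw, Perm.mul_apply, swap_apply_def]
  grind -ring -linarith -lia

theorem isSwap_of_mem_adjSwaps (hn : 2 ≤ n) {s : Perm (Fin n)} (hs : s ∈ adjSwaps n) :
    s.IsSwap := by
  obtain ⟨i, rfl⟩ := hs
  exact ⟨i, i + 1, (add_one_ne_self hn i).symm, rfl⟩

theorem mclosure_adjSwaps : Submonoid.closure (adjSwaps n) = ⊤ := by
  obtain ⟨m, rfl⟩ : ∃ m, n = m + 1 := Nat.exists_eq_succ_of_ne_zero (NeZero.ne n)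
  refine top_unique ((Perm.mclosure_swap_castSucc_succ m).symm.le.trans
    (Submonoid.closure_mono ?_))
  rintro _ ⟨i, rfl⟩
  exact ⟨i.castSucc, by rw [sw, coeSucc_eq_succ]⟩

theorem adj_iff (hn : 2 ≤ n) {x y : Perm (Fin n)} : x ∼ y ↔ ∃ i, y = sw i * x := by
  rw [cay_adj_iff (by rintro ⟨i, h⟩; exact sw_ne_one hn i h)
    (by rintro _ ⟨i, rfl⟩; exact ⟨i, sw_inv i⟩)]
  exact exists_congr fun i => by rw [eq_mul_inv_iff_mul_eq, eq_comm]

theorem mem_adjSwaps_iff_adj_one (hn : 2 ≤ n) {x : Perm (Fin n)} : x ∈ adjSwaps n ↔ 1 ∼ x := by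
  rw [adj_iff hn]
  exact exists_congr fun i => by rw [mul_one, eq_comm]

theorem cycle_adj_iff (hn : 2 ≤ n) {p q : Fin n} :
    (TransGraph n (adjSwaps n)).Adj p q ↔ q = p + 1 ∨ p = q + 1 := by
  rw [transGraph_adj_iff]
  constructor
  · rintro ⟨hpq, i, h⟩
    have := congrArg (· p) h
    simp only [sw, swap_apply_def] at this
    grind
  · rintro (rfl | rfl)
    · exact ⟨(add_one_ne_self hn p).symm, p, rfl⟩
    · exact ⟨add_one_ne_self hn q, q, swap_comm _ _⟩

theorem adj_sw_and_adj_sw_iff (hn : 4 ≤ n) {p q : Fin n} (hpq : p ≠ q) {z : Perm (Fin n)} :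
    sw p ∼ z ∧ sw q ∼ z ↔ z = 1 ∨ (z = sw q * sw p ∧ q ≠ p + 1 ∧ p ≠ q + 1) := by
  simp only [adj_iff (by omega : 2 ≤ n)]
  constructor
  · rintro ⟨⟨a, rfl⟩, b, h⟩
    rcases sw_mul_sw_eq_sw_mul_sw hn hpq h with ⟨rfl, -⟩ | ⟨rfl, -, hqp, hpq'⟩
    · exact Or.inl (sw_mul_self a)
    · exact Or.inr ⟨rfl, hqp, hpq'⟩
  · rintro (rfl | ⟨rfl, hqp, hpq'⟩)
    · exact ⟨⟨p, (sw_mul_self p).symm⟩, q, (sw_mul_self q).symm⟩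
    · exact ⟨⟨q, rfl⟩, p, sw_mul_sw_comm (Ne.symm hpq) hpq' hqp⟩

theorem cycle_adj_iff_forall_adj_imp_eq_one (hn : 4 ≤ n) {p q : Fin n} (hpq : p ≠ q) :
    (TransGraph n (adjSwaps n)).Adj p q ↔ ∀ z, sw p ∼ z → sw q ∼ z → z = 1 := by
  rw [cycle_adj_iff (by omega)]
  refine ⟨fun hadj z hp hq => ?_, fun h => ?_⟩
  · rcases (adj_sw_and_adj_sw_iff hn hpq).1 ⟨hp, hq⟩ with h | ⟨-, hqp, hpq'⟩
    · exact h
    · exact (hadj.elim hqp hpq').elim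
  · by_contra hna
    rw [not_or] at hna
    have := (adj_sw_and_adj_sw_iff hn hpq).2 (Or.inr ⟨rfl, hna⟩)
    exact sw_mul_sw_ne_one (by omega) (Ne.symm hpq) (h _ this.1 this.2)

theorem eq_sw_of_adj_of_adj (hn : 4 ≤ n) {i : Fin n} {z : Perm (Fin n)}
    (h₁ : sw (i + 1) * sw i ∼ z) (h₂ : sw (i + 1 + 1) * sw i ∼ z) : z = sw i := by
  have htrans (x : Perm (Fin n)) : x * sw i ∼ z ↔ x ∼ z * sw i := by
    simpa [mul_assoc] using mulRight_mem_graphAut_cay (adjSwaps n) (sw i) x (z * sw i)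
  rcases (adj_sw_and_adj_sw_iff hn (add_one_ne_self (by omega) (i + 1)).symm).1
    ⟨(htrans _).1 h₁, (htrans _).1 h₂⟩ with h | ⟨-, h, -⟩
  · rwa [mul_eq_one_iff_eq_inv, sw_inv] at h
  · exact absurd rfl h

section Rigidity

variable {f : Perm (Perm (Fin n))}

theorem apply_sw_mul_sw_of_not_adj (hn : 4 ≤ n) (hf : f ∈ graphAut (Cay n (adjSwaps n)))
    (h1 : f 1 = 1) (hS : ∀ i, f (sw i) = sw i) {p q : Fin n} (hpq : p ≠ q) (hqp : q ≠ p + 1)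
    (hpq' : p ≠ q + 1) : f (sw q * sw p) = sw q * sw p := by
  obtain ⟨hp, hq⟩ := (adj_sw_and_adj_sw_iff hn hpq).2 (Or.inr ⟨rfl, hqp, hpq'⟩)
  rw [← hf, hS] at hp hq
  rcases (adj_sw_and_adj_sw_iff hn hpq).1 ⟨hp, hq⟩ with h | ⟨h, -⟩
  · exact absurd (f.injective (h.trans h1.symm)) (sw_mul_sw_ne_one (by omega) (Ne.symm hpq))
  · exact h

theorem exists_apply_sw_mul_sw (hn : 2 ≤ n) (hf : f ∈ graphAut (Cay n (adjSwaps n)))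
    (hS : ∀ i, f (sw i) = sw i) (p q : Fin n) : ∃ c, f (sw p * sw q) = sw c * sw q := by
  have : sw q ∼ sw p * sw q := (adj_iff hn).2 ⟨p, rfl⟩
  rw [← hf, hS] at this
  exact (adj_iff hn).1 this

theorem apply_sw_mul_sw_ne (hn : 5 ≤ n) (hf : f ∈ graphAut (Cay n (adjSwaps n)))
    (h1 : f 1 = 1) (hS : ∀ i, f (sw i) = sw i) (c : Fin n) :
    f (sw (c + 1 + 1) * sw (c + 1)) ≠ sw c * sw (c + 1) := by
  intro hx
  have hy : f (sw (c + 1 + 1 + 1) * sw (c + 1)) = sw (c + 1 + 1 + 1) * sw (c + 1) :=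
    apply_sw_mul_sw_of_not_adj (by omega) hf h1 hS (add_two_ne_self (by omega) _).symm
      (add_one_ne_self (by omega) _) (add_three_ne_self (by omega) _).symm
  have hcomm : sw c * sw (c + 1 + 1 + 1) = sw (c + 1 + 1 + 1) * sw c :=
    sw_mul_sw_comm (add_three_ne_self (by omega) c).symm (add_two_ne_self (by omega) _)
      (add_four_ne_self hn c).symm
  -- `w` is adjacent to both `f x = sw c * sw (c + 1)` and `f y = y`, where `x` and `y` are the
  -- two products in `hx` and `hy`; but `sw (c + 1)` is the only common neighbour of `x` and `y`.
  set w := sw c * (sw (c + 1 + 1 + 1) * sw (c + 1)) with hw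
  have h₁ : sw (c + 1 + 1) * sw (c + 1) ∼ f.symm w := by
    rw [← hf, f.apply_symm_apply, hx]
    exact (adj_iff (by omega)).2 ⟨c + 1 + 1 + 1, by rw [hw, ← mul_assoc, hcomm, mul_assoc]⟩
  have h₂ : sw (c + 1 + 1 + 1) * sw (c + 1) ∼ f.symm w := by
    rw [← hf, f.apply_symm_apply, hy]
    exact (adj_iff (by omega)).2 ⟨c, rfl⟩
  have := eq_sw_of_adj_of_adj (by omega) h₁ h₂
  rw [Equiv.symm_apply_eq, hS, hw, ← mul_assoc, mul_eq_right] at this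
  exact sw_mul_sw_ne_one (by omega) (add_three_ne_self (by omega) c).symm this

theorem apply_sw_mul_sw (hn : 5 ≤ n) (hf : f ∈ graphAut (Cay n (adjSwaps n))) (h1 : f 1 = 1)
    (hS : ∀ i, f (sw i) = sw i) (p q : Fin n) : f (sw p * sw q) = sw p * sw q := by
  have hfixed (c : Fin n) (hc : ¬(c = q + 1 ∨ q = c + 1)) : f (sw c * sw q) = sw c * sw q := by
    rcases eq_or_ne q c with rfl | hqc
    · rw [sw_mul_self, h1]
    · exact apply_sw_mul_sw_of_not_adj (by omega) hf h1 hS hqc (not_or.1 hc).1 (not_or.1 hc).2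
  refine (em (p = q + 1 ∨ q = p + 1)).elim (fun hp => ?_) (hfixed p)
  obtain ⟨c, hc⟩ := exists_apply_sw_mul_sw (by omega) hf hS p q
  by_cases hcp : c = p
  · rw [hc, hcp]
  have hc' : c = q + 1 ∨ q = c + 1 := by
    by_contra h
    have := f.injective (hc.trans (hfixed c h).symm)
    exact hcp (sw_injective (by omega) (mul_right_cancel this)).symm
  -- `f` would exchange the two cycle-neighbours of `q`
  rcases hp with rfl | rfl <;> rcases hc' with rfl | hcq
  · exact absurd rfl hcp
  · subst hcq
    exact absurd hc (apply_sw_mul_sw_ne hn hf h1 hS c)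
  · refine absurd ?_ (apply_sw_mul_sw_ne hn (inv_mem hf) (by rw [Perm.inv_eq_iff_eq, h1])
      (fun i => by rw [Perm.inv_eq_iff_eq, hS]) p)
    rw [Perm.inv_eq_iff_eq, hc]
  · exact absurd (add_right_cancel hcq).symm hcp

theorem eq_one_of_apply_sw_eq (hn : 5 ≤ n) (hf : f ∈ graphAut (Cay n (adjSwaps n)))
    (h1 : f 1 = 1) (hS : ∀ i, f (sw i) = sw i) : f = 1 := by
  refine eq_one_of_forall_apply_mul_eq mclosure_adjSwaps ?_ hf h1 (by rintro _ ⟨i, rfl⟩; exact hS i)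
  rintro g hg hg1 hgS _ ⟨q, rfl⟩ _ ⟨p, rfl⟩
  exact apply_sw_mul_sw hn hg hg1 (fun i => hgS _ ⟨i, rfl⟩) p q

theorem apply_mem_adjSwaps_iff (hn : 2 ≤ n) (hf : f ∈ graphAut (Cay n (adjSwaps n)))
    (h1 : f 1 = 1) (x : Perm (Fin n)) : f x ∈ adjSwaps n ↔ x ∈ adjSwaps n := by
  rw [mem_adjSwaps_iff_adj_one hn, mem_adjSwaps_iff_adj_one hn, ← hf 1 x, h1]

end Rigidity

/-- `f` permutes the neighbours `sw i` of `1`; this is its action on the indices `i`, which stand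
for the edges `{i, i + 1}` of the cycle `TransGraph n (adjSwaps n)`. -/
noncomputable def edgePerm (hn : 3 ≤ n) (f : Perm (Perm (Fin n)))
    (hf : ∀ x, f x ∈ adjSwaps n ↔ x ∈ adjSwaps n) : Perm (Fin n) :=
  (Equiv.ofInjective sw (sw_injective hn)).permCongr.symm (f.subtypePerm hf)

theorem sw_edgePerm (hn : 3 ≤ n) {f : Perm (Perm (Fin n))}
    (hf : ∀ x, f x ∈ adjSwaps n ↔ x ∈ adjSwaps n) (i : Fin n) :
    sw (edgePerm hn f hf i) = f (sw i) := by
  simp only [edgePerm, permCongr_symm_apply, apply_ofInjective_symm]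
  rfl

theorem edgePerm_mem_graphAut (hn : 4 ≤ n) {f : Perm (Perm (Fin n))}
    (hf : f ∈ graphAut (Cay n (adjSwaps n))) (h1 : f 1 = 1) :
    edgePerm (by omega) f (apply_mem_adjSwaps_iff (by omega) hf h1) ∈
      graphAut (TransGraph n (adjSwaps n)) := by
  intro p q
  rcases eq_or_ne p q with rfl | hpq
  · simp
  have hpq' := (edgePerm (by omega) f (apply_mem_adjSwaps_iff (by omega) hf h1)).injective.ne hpq
  rw [cycle_adj_iff_forall_adj_imp_eq_one hn hpq, cycle_adj_iff_forall_adj_imp_eq_one hn hpq',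
    sw_edgePerm, sw_edgePerm, ← f.forall_congr_right]
  have hf1 (z : Perm (Fin n)) : f z = 1 ↔ z = 1 :=
    ⟨fun h => f.injective (h.trans h1.symm), fun h => h ▸ h1⟩
  simp only [hf _ _, hf1]

theorem card_stabilizer_le (hn : 5 ≤ n) :
    Nat.card (MulAction.stabilizer (graphAut (Cay n (adjSwaps n))) (1 : Perm (Fin n))) ≤
      Nat.card (graphAut (TransGraph n (adjSwaps n))) := by
  refine Nat.card_le_card_of_injective
    (fun f => ⟨_, edgePerm_mem_graphAut (by omega) f.1.2 f.2⟩) fun f g hfg => ?_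
  have h1 (f : MulAction.stabilizer (graphAut (Cay n (adjSwaps n))) (1 : Perm (Fin n))) :
      f.1.1 1 = 1 := f.2
  have hsw (i : Fin n) : f.1.1 (sw i) = g.1.1 (sw i) := by
    rw [← sw_edgePerm (by omega), ← sw_edgePerm (by omega)]
    exact congrArg (fun a : graphAut (TransGraph n (adjSwaps n)) => sw (a.1 i)) hfg
  have := eq_one_of_apply_sw_eq hn (mul_mem (inv_mem g.1.2) f.1.2)
    (by rw [Perm.mul_apply, h1 f, Perm.inv_eq_iff_eq, h1 g])
    (fun i => by rw [Perm.mul_apply, hsw, Perm.inv_eq_iff_eq])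
  exact Subtype.ext (Subtype.ext (inv_mul_eq_one.1 this).symm)

section Cycle

open Fin.CommRing

theorem addRight_mem_graphAut_cycle (hn : 2 ≤ n) (a : Fin n) :
    Equiv.addRight a ∈ graphAut (TransGraph n (adjSwaps n)) := by
  intro x y
  simp only [cycle_adj_iff hn, coe_addRight, add_right_comm _ a 1, add_left_inj]

theorem subLeft_mem_graphAut_cycle (hn : 2 ≤ n) (a : Fin n) :
    Equiv.subLeft a ∈ graphAut (TransGraph n (adjSwaps n)) := by
  intro x y
  simp only [cycle_adj_iff hn, subLeft_apply]
  constructor <;> rintro (h | h) <;> [right; left; right; left] <;> linear_combination h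

variable {f : Perm (Fin n)}

theorem apply_one_sub_apply_zero (hn : 2 ≤ n) (hf : f ∈ graphAut (TransGraph n (adjSwaps n))) :
    f 1 - f 0 = 1 ∨ f 1 - f 0 = -1 := by
  rcases (cycle_adj_iff hn).1 ((hf 0 1).2 ((cycle_adj_iff hn).2 (Or.inl (zero_add 1).symm)))
    with h | h
  · left; linear_combination h
  · right; linear_combination -h

theorem apply_add_one (hn : 3 ≤ n) (hf : f ∈ graphAut (TransGraph n (adjSwaps n))) (x : Fin n) :
    f (x + 1) = f x + (f 1 - f 0) := by
  have hstep (y : Fin n) : f (y + 1) = f y + 1 ∨ f y = f (y + 1) + 1 :=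
    (cycle_adj_iff (by omega)).1 ((hf _ _).2 ((cycle_adj_iff (by omega)).2 (Or.inl rfl)))
  suffices ∀ m : ℕ, f ((m : Fin n) + 1) = f m + (f 1 - f 0) by
    simpa using this x.val
  intro m
  induction m with
  | zero => simp
  | succ m ih =>
    push_cast
    have hne : f ((m : Fin n) + 1 + 1) ≠ f m := f.injective.ne (add_two_ne_self hn _)
    rcases hstep (m + 1) with h | h <;> rcases apply_one_sub_apply_zero (by omega) hf with hd | hd
    · linear_combination h - hd
    · exact absurd (by linear_combination h + ih + hd) hne
    · exact absurd (by linear_combination -h + ih + hd) hne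
    · linear_combination -h - hd

theorem eq_addRight_or_eq_subLeft (hn : 3 ≤ n) (hf : f ∈ graphAut (TransGraph n (adjSwaps n))) :
    f = Equiv.addRight (f 0) ∨ f = Equiv.subLeft (f 0) := by
  have hlin (m : ℕ) : f m = f 0 + m * (f 1 - f 0) := by
    induction m with
    | zero => simp
    | succ m ih => push_cast; rw [apply_add_one hn hf, ih]; ring
  have hlin' (x : Fin n) : f x = f 0 + x * (f 1 - f 0) := by simpa using hlin x.val
  rcases apply_one_sub_apply_zero (by omega) hf with hd | hd
  · left; ext x; simp [hlin' x, hd, add_comm]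
  · right; ext x; simp [hlin' x, hd, sub_eq_add_neg]

theorem card_graphAut_cycle (hn : 3 ≤ n) :
    Nat.card (graphAut (TransGraph n (adjSwaps n))) = 2 * n := by
  let φ : Fin n ⊕ Fin n → graphAut (TransGraph n (adjSwaps n)) :=
    Sum.elim (fun a => ⟨_, addRight_mem_graphAut_cycle (by omega) a⟩)
      (fun a => ⟨_, subLeft_mem_graphAut_cycle (by omega) a⟩)
  have hφ : Bijective φ := by
    refine ⟨?_, fun ⟨f, hf⟩ => ?_⟩
    · rintro (a | a) (b | b) h <;>
        have h0 := congrArg (fun f : graphAut (TransGraph n (adjSwaps n)) => f.1 0) h <;>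
        have h1 := congrArg (fun f : graphAut (TransGraph n (adjSwaps n)) => f.1 1) h <;>
        simp [φ] at h0 h1
      · rw [h0]
      · exact absurd (by linear_combination h1 - h0) (add_two_ne_self hn a)
      · exact absurd (by linear_combination h0 - h1) (add_two_ne_self hn a)
      · rw [h0]
    · rcases eq_addRight_or_eq_subLeft hn hf with h | h
      · exact ⟨Sum.inl (f 0), Subtype.ext h.symm⟩
      · exact ⟨Sum.inr (f 0), Subtype.ext h.symm⟩
  rw [← Nat.card_eq_of_bijective φ hφ, Nat.card_sum, Nat.card_fin]
  ring

end Cycle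

end ModifiedBubbleSort

open ModifiedBubbleSort in
/-- For all `n ≥ 5`, the automorphism group of the modified
bubble-sort graph of dimension `n` has order `2n · n!`. -/
theorem card_aut_modifiedBubbleSort (n : ℕ) (hn : 5 ≤ n) :
    Nat.card
      (graphAut (Cay n
        {s : Equiv.Perm (Fin n) | ∃ i : Fin n, s = Equiv.swap i (i + ⟨1, by omega⟩)})) =
      2 * n * Nat.factorial n := by
  have : NeZero n := ⟨by omega⟩
  have hS : {s : Equiv.Perm (Fin n) | ∃ i : Fin n, s = Equiv.swap i (i + ⟨1, by omega⟩)} =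
      adjSwaps n := by
    have hone : (⟨1, by omega⟩ : Fin n) = 1 := Fin.ext (Nat.mod_eq_of_lt (by omega)).symm
    ext s
    simp only [hone, Set.mem_ofPred_eq, adjSwaps, Set.mem_range, sw, eq_comm]
  rw [hS, card_graphAut_cay, le_antisymm (card_stabilizer_le hn)
    (card_graphAut_transGraph_le (by omega) fun _ => isSwap_of_mem_adjSwaps (by omega)),
    card_graphAut_cycle (by omega)]
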